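/- arXiv:1811.00230 — 4 statements merged into one kernel-verified Lean document; each statement's English description precedes it below -/
import Mathlib

section
/- Let G be a finite connected, non-complete strongly regular graph with parameters (v, k, a1, c2), set b1 = k − a1 − 1, and let θ1 be the second-largest eigenvalue of its adjacency matrix. If max(b1/(k+1), c2/k) ≤ (k − θ1)/k, then h_G ≤ (k − θ1)/k. -/
/-!
The closed neighbourhood `S` of a vertex has `k + 1` vertices, and each of its `k` non-central
vertices has exactly `b1` neighbours outside it, so `E[S,Sᶜ] = k·b1`. Counting the same edges
from the other side with the identity `k·b1 = (v − k − 1)·c2` gives `E[Sᶜ,S] = |Sᶜ|·c2`.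
Whichever of `S`, `Sᶜ` contains at most half of the vertices (`Sᶜ` is nonempty because `G` is
not complete) witnesses `h_G ≤ b1/(k+1)` or `h_G ≤ c2/k`, hence `h_G ≤ max(b1/(k+1), c2/k)`.
-/

open Finset Matrix

/-- `E[S,T]`: the number of ordered pairs `(x, y)` with `x ∈ S`, `y ∈ T` and `x, y` adjacent. -/
def eB {V : Type} [Fintype V] [DecidableEq V] (G : SimpleGraph V) [DecidableRel G.Adj]
    (S T : Finset V) : ℕ :=
  ((S ×ˢ T).filter fun p => G.Adj p.1 p.2).card

/-- The Cheeger constant of a `k`-regular graph `G`: the infimum of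
`E[S,Sᶜ] / (k·|S|)` over nonempty vertex subsets `S` with `2·|S| ≤ |V|`. -/
noncomputable def cheeger {V : Type} [Fintype V] [DecidableEq V] (G : SimpleGraph V)
    [DecidableRel G.Adj] (k : ℕ) : ℝ :=
  sInf {x : ℝ | ∃ S : Finset V, S.Nonempty ∧ 2 * S.card ≤ Fintype.card V ∧
    x = (eB G S Sᶜ : ℝ) / (k * S.card)}

/-- `θ` is an eigenvalue of the adjacency matrix of `G`. -/
def IsAdjEigenvalue {V : Type} [Fintype V] [DecidableEq V] (G : SimpleGraph V)
    [DecidableRel G.Adj] (θ : ℝ) : Prop :=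
  ∃ f : V → ℝ, f ≠ 0 ∧ G.adjMatrix ℝ *ᵥ f = θ • f

/-- `θ` is the second-largest adjacency eigenvalue of the connected `k`-regular graph `G`,
i.e. the largest eigenvalue distinct from the top eigenvalue `k`
(which has multiplicity one for connected graphs). -/
def IsSecondLargestAdjEigenvalue {V : Type} [Fintype V] [DecidableEq V] (G : SimpleGraph V)
    [DecidableRel G.Adj] (k : ℕ) (θ : ℝ) : Prop :=
  IsAdjEigenvalue G θ ∧ θ ≠ (k : ℝ) ∧ ∀ μ : ℝ, IsAdjEigenvalue G μ → μ ≠ (k : ℝ) → μ ≤ θ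

namespace SimpleGraph

variable {V : Type} [Fintype V] [DecidableEq V] (G : SimpleGraph V) [DecidableRel G.Adj]

lemma eB_eq_sum_card_bipartiteAbove (S T : Finset V) :
    eB G S T = ∑ a ∈ S, #(T.bipartiteAbove G.Adj a) := by
  simp only [eB, card_filter, sum_product, bipartiteAbove]

lemma eB_comm (S T : Finset V) : eB G S T = eB G T S := by
  apply card_nbij' Prod.swap Prod.swap <;>
    simp +contextual [Set.MapsTo, Set.LeftInvOn, Set.RightInvOn, G.adj_comm, and_comm]

lemma cheeger_le {k : ℕ} {S : Finset V} (hS : S.Nonempty) (hcard : 2 * #S ≤ Fintype.card V) :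
    cheeger G k ≤ eB G S Sᶜ / (k * #S) := by
  refine csInf_le ⟨0, ?_⟩ ⟨S, hS, hcard, rfl⟩
  rintro _ ⟨T, -, -, rfl⟩
  positivity

lemma cheeger_zero_nonpos : cheeger G 0 ≤ 0 :=
  Real.sInf_nonpos fun _ ⟨_, _, _, hx⟩ => by simp [hx]

variable {G} {v k a1 c2 : ℕ}

lemma IsSRGWith.card_neighborFinset_sdiff_insert (h : G.IsSRGWith v k a1 c2) {x w : V}
    (hxw : G.Adj x w) : #(G.neighborFinset w \ insert x (G.neighborFinset x)) = k - a1 - 1 := by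
  have hcommon : #(insert x (G.neighborFinset x) ∩ G.neighborFinset w) = a1 + 1 := by
    rw [insert_inter_of_mem (by simpa using hxw.symm), card_insert_of_notMem (by simp)]
    simp_rw [neighborFinset_def, ← Set.toFinset_inter, ← h.of_adj x w hxw, ← Set.toFinset_card]
    congr!
  rw [card_sdiff, hcommon, card_neighborFinset_eq_degree, h.regular w, Nat.sub_sub]

lemma IsSRGWith.eB_insert_neighborFinset_compl (h : G.IsSRGWith v k a1 c2) (x : V) :
    eB G (insert x (G.neighborFinset x)) (insert x (G.neighborFinset x))ᶜ = k * (k - a1 - 1) := by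
  set S := insert x (G.neighborFinset x)
  have hcenter : #(Sᶜ.bipartiteAbove G.Adj x) = 0 := by
    simp [S, bipartiteAbove, filter_eq_empty_iff]
  have hneighbor : ∀ w ∈ G.neighborFinset x, #(Sᶜ.bipartiteAbove G.Adj w) = k - a1 - 1 := by
    intro w hw
    rw [← h.card_neighborFinset_sdiff_insert ((G.mem_neighborFinset x w).1 hw)]
    congr 1
    ext u
    simp [S, bipartiteAbove, and_comm]
  rw [eB_eq_sum_card_bipartiteAbove, sum_insert (by simp), hcenter, zero_add,
    sum_congr rfl hneighbor, sum_const, smul_eq_mul, card_neighborFinset_eq_degree, h.regular x]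

lemma IsSRGWith.cheeger_le_max (h : G.IsSRGWith v k a1 c2) (hnc : G ≠ ⊤) :
    cheeger G k ≤ max (((k : ℝ) - a1 - 1) / (k + 1)) (c2 / k) := by
  obtain rfl | hk := k.eq_zero_or_pos
  · -- with `k = 0` both `c2 / k` and every ratio in the infimum are `0` (division by zero)
    exact le_max_of_le_right (by simpa using G.cheeger_zero_nonpos)
  obtain ⟨x, z, hxz, hnadj⟩ : ∃ x z, x ≠ z ∧ ¬G.Adj x z := by
    by_contra! hall
    exact hnc (eq_top_iff.2 fun a b hab => hall a b hab)
  have ha1 : a1 < k := by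
    obtain ⟨y, hxy⟩ := (G.degree_pos_iff_exists_adj x).1 (h.regular x ▸ hk)
    simpa [h.regular x, h.of_adj x y hxy] using hxy.card_commonNeighbors_lt_degree
  set S := insert x (G.neighborFinset x)
  have hS : #S = k + 1 := by
    rw [card_insert_of_notMem (by simp), card_neighborFinset_eq_degree, h.regular x]
  have hE := h.eB_insert_neighborFinset_compl x
  have hv := h.card
  by_cases hsmall : 2 * (k + 1) ≤ Fintype.card V
  · refine le_max_of_le_left ((G.cheeger_le ⟨x, mem_insert_self _ _⟩ (hS ▸ hsmall)).trans_eq ?_)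
    rw [hE, hS, Nat.sub_sub]
    push_cast [Nat.cast_sub (show a1 + 1 ≤ k by omega)]
    field_simp
    ring
  · have hSc : #Sᶜ = v - k - 1 := by rw [card_compl, hS]; omega
    have hz : z ∈ Sᶜ := by simp [S, hxz.symm, hnadj]
    have hpos : 0 < v - k - 1 := hSc ▸ card_pos.2 ⟨z, hz⟩
    refine le_max_of_le_right ((G.cheeger_le ⟨z, hz⟩ (by omega)).trans_eq ?_)
    rw [compl_compl, eB_comm, hE, IsSRGWith.param_eq G h (by omega), hSc]
    push_cast
    field_simp

end SimpleGraph

theorem stmt_7_general {V : Type} [Fintype V] [DecidableEq V] (G : SimpleGraph V) [DecidableRel G.Adj]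
    (v k a1 c2 : ℕ) (hsrg : G.IsSRGWith v k a1 c2)
    (hnc : G ≠ ⊤)
    (θ1 : ℝ)
    (hmax : max (((k : ℝ) - (a1 : ℝ) - 1) / ((k : ℝ) + 1)) ((c2 : ℝ) / (k : ℝ)) ≤
      ((k : ℝ) - θ1) / (k : ℝ)) :
    cheeger G k ≤ ((k : ℝ) - θ1) / (k : ℝ) :=
  (hsrg.cheeger_le_max hnc).trans hmax

/-- If a finite connected non-complete strongly regular graph with parameters `(v, k, a1, c2)`
and second-largest adjacency eigenvalue `θ1` satisfies
`max (b1/(k+1)) (c2/k) ≤ (k - θ1)/k` with `b1 = k - a1 - 1`, then `h_G ≤ (k - θ1)/k`. -/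
theorem stmt_7 {V : Type} [Fintype V] [DecidableEq V] (G : SimpleGraph V) [DecidableRel G.Adj]
    (v k a1 c2 : ℕ) (hsrg : G.IsSRGWith v k a1 c2)
    (hconn : G.Connected) (hnc : G ≠ ⊤)
    (θ1 : ℝ) (hθ1 : IsSecondLargestAdjEigenvalue G k θ1)
    (hmax : max (((k : ℝ) - (a1 : ℝ) - 1) / ((k : ℝ) + 1)) ((c2 : ℝ) / (k : ℝ)) ≤
      ((k : ℝ) - θ1) / (k : ℝ)) :
    cheeger G k ≤ ((k : ℝ) - θ1) / (k : ℝ) :=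
  stmt_7_general G v k a1 c2 hsrg hnc θ1 hmax
end

section
/- Let G be any finite connected, non-complete strongly regular graph with valency k, and let θ1 be the second-largest eigenvalue of its adjacency matrix. Then h_G ≤ (k − θ1)/k. -/
open Finset Matrix

/-!
An eigenvector of a strongly regular graph for an eigenvalue `θ ≠ k` is orthogonal to the
all-ones vector, so `A² = k I + a₁ A + c₂ (J - I - A)` makes `θ` a root of
`θ² = (a₁ - c₂) θ + (k - c₂)`.
This pins `θ` down enough that one of three sets `S` with `2|S| ≤ v` has
`E[S, Sᶜ] ≤ (k - θ) |S|`: the non-neighbours of a vertex when `v ≤ 2k + 1` (each sends `c₂ ≤ k - θ`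
edges back), its closed neighbourhood when `θ ≤ a₁ + 1` (boundary `k (k - a₁ - 1)`), and otherwise,
when `2θ ≤ k - 1`, a set of size `⌊v/2⌋` whose boundary is at most the average `k m (v - m)/(v - 1)`
over all sets of that size.
-/

open SimpleGraph

theorem Nat.add_two_mul_add_one_mul_choose (n p : ℕ) :
    (n + 2) * (n + 1) * n.choose p = (n + 2).choose (p + 1) * (p + 1) * (n + 1 - p) := by
  rw [mul_assoc, mul_comm (n + 1), Nat.choose_mul_succ_eq, ← mul_assoc,
    Nat.add_one_mul_choose_eq]

section Cut

variable {V : Type} [Fintype V] [DecidableEq V] (G : SimpleGraph V) [DecidableRel G.Adj]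

theorem eB_comm (S T : Finset V) : eB G S T = eB G T S := by
  refine card_bij (fun p _ => p.swap) ?_ (fun _ _ _ _ h => Prod.swap_injective h) ?_
  · simp only [mem_filter, mem_product, Prod.fst_swap, Prod.snd_swap]
    exact fun p ⟨⟨hS, hT⟩, hadj⟩ => ⟨⟨hT, hS⟩, hadj.symm⟩
  · simp only [mem_filter, mem_product]
    exact fun p ⟨⟨hT, hS⟩, hadj⟩ => ⟨p.swap, by simp [hS, hT, hadj.symm]⟩

theorem eB_eq_sum_card_filter (S T : Finset V) :
    eB G S T = ∑ x ∈ S, #{y ∈ T | G.Adj x y} := by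
  simp only [eB, card_filter, sum_product]

theorem eB_univ_univ {k : ℕ} (hk : G.IsRegularOfDegree k) :
    eB G univ univ = k * Fintype.card V := by
  simp only [eB_eq_sum_card_filter, ← neighborFinset_eq_filter, card_neighborFinset_eq_degree,
    hk.degree_eq, sum_const, card_univ, smul_eq_mul, mul_comm]

theorem cheeger_le_of_eB_le (k : ℕ) {c : ℝ} (S : Finset V) (hS : S.Nonempty)
    (hS2 : 2 * #S ≤ Fintype.card V) (hcut : (eB G S Sᶜ : ℝ) ≤ c * #S) :
    cheeger G k ≤ c / k := by
  have hbdd : BddBelow {x : ℝ | ∃ S : Finset V, S.Nonempty ∧ 2 * #S ≤ Fintype.card V ∧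
      x = (eB G S Sᶜ : ℝ) / (k * #S)} := ⟨0, by rintro _ ⟨S, -, -, rfl⟩; positivity⟩
  refine (csInf_le hbdd ⟨S, hS, hS2, rfl⟩).trans ?_
  rw [mul_comm, ← div_div]
  gcongr
  rwa [div_le_iff₀ (by exact_mod_cast hS.card_pos)]

theorem card_powersetCard_filter_mem_notMem {x y : V} (hxy : x ≠ y) {m : ℕ} (hm : 0 < m) :
    #{S ∈ powersetCard m (univ : Finset V) | x ∈ S ∧ y ∉ S} =
      (Fintype.card V - 2).choose (m - 1) := by
  have hsets : {S ∈ powersetCard m (univ : Finset V) | x ∈ S ∧ y ∉ S} =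
      {S ∈ powersetCard m (univ.erase y) | {x} ⊆ S} := by
    ext S
    simp only [mem_filter, mem_powersetCard, subset_erase, singleton_subset_iff]
    tauto
  rw [hsets, card_filter_powersetCard_subset _ _ _ (by simpa using hxy)
      (by rw [card_singleton]; exact hm),
    card_erase_of_mem (mem_univ y), card_univ, card_singleton, Nat.sub_sub]

theorem sum_powersetCard_eB_compl {m : ℕ} (hm : 0 < m) :
    ∑ S ∈ powersetCard m univ, eB G S Sᶜ =
      eB G univ univ * (Fintype.card V - 2).choose (m - 1) := by
  set A := (univ ×ˢ univ).filter fun p : V × V => G.Adj p.1 p.2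
  have hcut (S : Finset V) :
      eB G S Sᶜ = #(A.bipartiteAbove (fun S p => p.1 ∈ S ∧ p.2 ∉ S) S) := by
    rw [eB, bipartiteAbove, filter_filter]
    congr 1
    ext p
    simp only [mem_filter, mem_product, mem_compl, mem_univ, true_and]
    tauto
  have hcount : ∀ p ∈ A, #((powersetCard m univ).bipartiteBelow
      (fun S p => p.1 ∈ S ∧ p.2 ∉ S) p) = (Fintype.card V - 2).choose (m - 1) := by
    intro p hp
    exact card_powersetCard_filter_mem_notMem (mem_filter.1 hp).2.ne hm
  simp only [hcut]
  rw [sum_card_bipartiteAbove_eq_sum_card_bipartiteBelow, sum_congr rfl hcount, sum_const,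
    smul_eq_mul]
  rfl

theorem exists_card_eq_mul_eB_compl_le {k : ℕ} (hk : G.IsRegularOfDegree k) {m : ℕ}
    (hm : 0 < m) (hmV : m < Fintype.card V) :
    ∃ S : Finset V, #S = m ∧
      (Fintype.card V - 1) * eB G S Sᶜ ≤ k * m * (Fintype.card V - m) := by
  obtain ⟨n, hn⟩ : ∃ n, Fintype.card V = n + 2 := ⟨Fintype.card V - 2, by omega⟩
  obtain ⟨p, rfl⟩ : ∃ p, m = p + 1 := ⟨m - 1, by omega⟩
  have hne : (powersetCard (p + 1) (univ : Finset V)).Nonempty :=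
    powersetCard_nonempty.2 (by rw [card_univ]; omega)
  have hsum : ∑ S ∈ powersetCard (p + 1) univ, (Fintype.card V - 1) * eB G S Sᶜ =
      ∑ S ∈ powersetCard (p + 1) (univ : Finset V), k * (p + 1) * (Fintype.card V - (p + 1)) := by
    rw [← mul_sum, sum_powersetCard_eB_compl G hm, eB_univ_univ G hk, sum_const,
      card_powersetCard, card_univ, smul_eq_mul, hn, Nat.add_sub_cancel, Nat.add_sub_cancel,
      show n + 2 - 1 = n + 1 by omega, show n + 2 - (p + 1) = n + 1 - p by omega,
      show (n + 1) * (k * (n + 2) * n.choose p) = k * ((n + 2) * (n + 1) * n.choose p) by ring,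
      Nat.add_two_mul_add_one_mul_choose]
    ring
  obtain ⟨S, hS, hle⟩ := exists_le_of_sum_le hne hsum.le
  exact ⟨S, (mem_powersetCard.1 hS).2, hle⟩

theorem exists_eB_compl_le_of_two_mul_le {k : ℕ} (hk : G.IsRegularOfDegree k) {θ : ℝ}
    (hθ : 2 * θ ≤ k - 1) (hV : 2 * k + 2 ≤ Fintype.card V) :
    ∃ S : Finset V, S.Nonempty ∧ 2 * #S ≤ Fintype.card V ∧ (eB G S Sᶜ : ℝ) ≤ (k - θ) * #S := by
  set N := Fintype.card V
  obtain ⟨S, hS, hle⟩ :=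
    exists_card_eq_mul_eB_compl_le G hk (m := N / 2) (by omega) (by omega)
  rw [← hS] at hle
  refine ⟨S, card_pos.1 (by omega), by omega, ?_⟩
  have hleR : ((N : ℝ) - 1) * eB G S Sᶜ ≤ k * #S * (N - #S) := by
    rw [← Nat.cast_pred (by omega), ← Nat.cast_sub (by omega : #S ≤ N)]
    exact_mod_cast hle
  have hkS : (k : ℝ) + 1 ≤ #S := by exact_mod_cast (by omega : k + 1 ≤ #S)
  have hNS : (N : ℝ) ≤ 2 * #S + 1 := by exact_mod_cast (by omega : N ≤ 2 * #S + 1)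
  have hVR : 2 * (k : ℝ) + 2 ≤ N := by exact_mod_cast hV
  have hN : (0 : ℝ) < N - 1 := by linarith
  have hθN : θ * (N - 1) ≤ k * (#S - 1) := by
    nlinarith [mul_le_mul_of_nonneg_right hθ hN.le,
      mul_nonneg (Nat.cast_nonneg k) (by linarith : (0 : ℝ) ≤ 2 * #S + 1 - N)]
  refine le_of_mul_le_mul_left ?_ hN
  nlinarith

end Cut

theorem le_sub_of_sq_eq {k ℓ μ θ : ℝ} (hθ : θ ^ 2 = (ℓ - μ) * θ + (k - μ)) (hμk : μ ≤ k)
    (hℓk : ℓ + 1 ≤ k) : θ ≤ k - μ := by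
  by_contra! hlt
  nlinarith [mul_pos (sub_pos.2 hlt) (show 0 < θ + (k - μ) - (ℓ - μ) by linarith)]

theorem two_mul_le_sub_one_of_sq_eq {k ℓ μ θ : ℝ} (hθ : θ ^ 2 = (ℓ - μ) * θ + (k - μ))
    (hℓ : 0 ≤ ℓ) (hμ : 1 ≤ μ) (hℓθ : ℓ + 1 < θ) : 2 * θ ≤ k - 1 := by
  have hθμ : θ * (μ + 1) ≤ k - μ := by
    nlinarith [mul_pos (by linarith : (0 : ℝ) < θ) (sub_pos.2 hℓθ)]
  nlinarith

namespace SimpleGraph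

theorem card_insert_neighborFinset {V : Type} [Fintype V] [DecidableEq V] (G : SimpleGraph V)
    [DecidableRel G.Adj] (x : V) : #(insert x (G.neighborFinset x)) = G.degree x + 1 := by
  rw [card_insert_of_notMem (G.notMem_neighborFinset_self x), card_neighborFinset_eq_degree]

namespace IsSRGWith

variable {V : Type} [Fintype V] {G : SimpleGraph V} [DecidableRel G.Adj] {n k ℓ μ : ℕ}

theorem lambda_lt_of_adj (h : G.IsSRGWith n k ℓ μ) {x y : V} (hxy : G.Adj x y) : ℓ < k := by
  rw [← h.of_adj x y hxy, ← h.regular x]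
  exact hxy.card_commonNeighbors_lt_degree

theorem mu_le_of_ne_top (h : G.IsSRGWith n k ℓ μ) (hnc : G ≠ ⊤) : μ ≤ k := by
  obtain ⟨x, y, hxy, hnadj⟩ := ne_top_iff_exists_not_adj.1 hnc
  rw [← h.of_not_adj hxy hnadj, ← h.regular x]
  exact G.card_commonNeighbors_le_degree_left x y

theorem mu_pos_of_connected (h : G.IsSRGWith n k ℓ μ) (hconn : G.Connected) (hnc : G ≠ ⊤) :
    0 < μ := by
  obtain ⟨x, y, hxy, hnadj⟩ := ne_top_iff_exists_not_adj.1 hnc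
  obtain ⟨p, hp⟩ := hconn.exists_walk_length_eq_dist x y
  obtain ⟨a, b, c, hab, hbc, hnac, hac⟩ :=
    p.exists_adj_adj_not_adj_ne hp (hconn.one_lt_dist_of_ne_of_not_adj hxy hnadj)
  rw [← h.of_not_adj hac hnac]
  exact Fintype.card_pos_iff.2 ⟨⟨b, hab, hbc.symm⟩⟩

variable [DecidableEq V]

theorem sq_eq_of_isAdjEigenvalue (h : G.IsSRGWith n k ℓ μ) {θ : ℝ} (hθ : IsAdjEigenvalue G θ)
    (hθk : θ ≠ k) : θ ^ 2 = (ℓ - μ) * θ + (k - μ) := by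
  obtain ⟨f, hf0, hf⟩ := hθ
  have hsum : ∑ x, f x = 0 := by
    have hk : G.adjMatrix ℝ *ᵥ 1 = (k : ℝ) • 1 := by
      ext x
      simpa using adjMatrix_mulVec_const_apply_of_regular h.regular (a := (1 : ℝ)) (v := x)
    have hdot : (k : ℝ) * ∑ x, f x = θ * ∑ x, f x := by
      have := dotProduct_mulVec 1 (G.adjMatrix ℝ) f
      rw [hf, ← mulVec_transpose, transpose_adjMatrix, hk] at this
      simpa [dotProduct_smul, smul_dotProduct, one_dotProduct] using this.symm
    by_contra hs
    exact hθk (mul_right_cancel₀ hs hdot).symm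
  have hcompl : Gᶜ.adjMatrix ℝ *ᵥ f = -f - θ • f := by
    have hJ : Gᶜ.adjMatrix ℝ = of 1 - 1 - G.adjMatrix ℝ := by
      rw [← compl_adjMatrix_eq_adjMatrix_compl,
        ← one_add_adjMatrix_add_compl_adjMatrix_eq_of_one (G := G) (α := ℝ)]
      abel
    have hJf : (of 1 : Matrix V V ℝ) *ᵥ f = 0 := by
      ext x
      simp [mulVec, dotProduct, hsum]
    rw [hJ, sub_mulVec, sub_mulVec, one_mulVec, hJf, hf]
    abel
  have hsq := congrArg (· *ᵥ f) (h.matrix_eq (α := ℝ))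
  simp only [add_mulVec, smul_mulVec, one_mulVec, hcompl, pow_two, ← mulVec_mulVec, hf,
    mulVec_smul] at hsq
  have hzero : (θ ^ 2 - ((ℓ - μ) * θ + (k - μ))) • f = 0 := by
    linear_combination (norm := module) hsq
  exact sub_eq_zero.1 ((smul_eq_zero.1 hzero).resolve_right hf0)

theorem eB_compl_insert_neighborFinset (h : G.IsSRGWith n k ℓ μ) (x : V) :
    eB G (insert x (G.neighborFinset x))ᶜ (insert x (G.neighborFinset x)) =
      #(insert x (G.neighborFinset x))ᶜ * μ := by
  rw [eB_eq_sum_card_filter, ← smul_eq_mul, ← sum_const]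
  refine sum_congr rfl fun w hw => ?_
  simp only [mem_compl, mem_insert, mem_neighborFinset, not_or] at hw
  rw [← h.of_not_adj (Ne.symm hw.1) hw.2, ← Set.toFinset_card]
  congr 1
  ext z
  simp only [mem_filter, mem_insert, mem_neighborFinset, Set.mem_toFinset, mem_commonNeighbors]
  grind [SimpleGraph.Adj.symm]

theorem eB_insert_neighborFinset_compl_s11 (h : G.IsSRGWith n k ℓ μ) (x : V) :
    eB G (insert x (G.neighborFinset x)) (insert x (G.neighborFinset x))ᶜ = k * (k - ℓ - 1) := by
  have hn : 0 < n := h.card ▸ Fintype.card_pos_iff.2 ⟨x⟩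
  rw [eB_comm, h.eB_compl_insert_neighborFinset, card_compl, card_insert_neighborFinset,
    h.regular x, h.card, h.param_eq G hn, Nat.sub_sub]

theorem exists_eB_compl_le (h : G.IsSRGWith n k ℓ μ) (hconn : G.Connected) (hnc : G ≠ ⊤)
    {θ : ℝ} (hθ : θ ^ 2 = (ℓ - μ) * θ + (k - μ)) :
    ∃ S : Finset V, S.Nonempty ∧ 2 * #S ≤ Fintype.card V ∧ (eB G S Sᶜ : ℝ) ≤ (k - θ) * #S := by
  obtain ⟨x, y, hxy, hnadj⟩ := ne_top_iff_exists_not_adj.1 hnc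
  have hμ := h.mu_pos_of_connected hconn hnc
  have hμk := h.mu_le_of_ne_top hnc
  obtain ⟨z, hxz⟩ := (G.degree_pos_iff_exists_adj x).1 (by rw [h.regular x]; omega)
  have hℓk := h.lambda_lt_of_adj hxz
  set T := insert x (G.neighborFinset x)
  have hT : #T = k + 1 := by rw [card_insert_neighborFinset, h.regular x]
  have hyT : y ∈ Tᶜ := by simp [T, hxy.symm, hnadj]
  have hTc : #Tᶜ = n - (k + 1) := by rw [card_compl, hT, h.card]
  have hkn : k + 2 ≤ n := by have := card_pos.2 ⟨y, hyT⟩; omega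
  rcases le_or_gt n (2 * k + 1) with hn | hn
  · refine ⟨Tᶜ, ⟨y, hyT⟩, by rw [hTc, h.card]; omega, ?_⟩
    rw [compl_compl, h.eB_compl_insert_neighborFinset, Nat.cast_mul, mul_comm]
    gcongr
    linarith [le_sub_of_sq_eq hθ (by exact_mod_cast hμk) (by exact_mod_cast hℓk)]
  rcases le_or_gt θ (ℓ + 1) with hθℓ | hθℓ
  · refine ⟨T, ⟨x, mem_insert_self _ _⟩, by rw [hT, h.card]; omega, ?_⟩
    rw [h.eB_insert_neighborFinset_compl_s11, hT, Nat.sub_sub, Nat.cast_mul, Nat.cast_sub hℓk]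
    have hℓkR : (ℓ : ℝ) + 1 ≤ k := by exact_mod_cast hℓk
    push_cast
    nlinarith [mul_le_mul_of_nonneg_right (by linarith : (k : ℝ) - (ℓ + 1) ≤ k - θ)
      (by positivity : (0 : ℝ) ≤ k + 1)]
  · exact exists_eB_compl_le_of_two_mul_le G h.regular
      (two_mul_le_sub_one_of_sq_eq hθ (Nat.cast_nonneg ℓ) (by exact_mod_cast hμ) hθℓ)
      (by rw [h.card]; omega)

end IsSRGWith

end SimpleGraph

/-- Every finite connected non-complete strongly regular graph with valency `k` and
second-largest adjacency eigenvalue `θ1` satisfies `h_G ≤ (k - θ1)/k`. -/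
theorem stmt_11 {V : Type} [Fintype V] [DecidableEq V] (G : SimpleGraph V) [DecidableRel G.Adj]
    (v k a1 c2 : ℕ) (hsrg : G.IsSRGWith v k a1 c2)
    (hconn : G.Connected) (hnc : G ≠ ⊤)
    (θ1 : ℝ) (hθ1 : IsSecondLargestAdjEigenvalue G k θ1) :
    cheeger G k ≤ ((k : ℝ) - θ1) / (k : ℝ) := by
  obtain ⟨S, hS, hS2, hcut⟩ := hsrg.exists_eB_compl_le hconn hnc
    (hsrg.sq_eq_of_isAdjEigenvalue hθ1.1 hθ1.2.1)
  exact cheeger_le_of_eB_le G k S hS hS2 hcut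
end

section
/- Let G be a finite distance-regular graph of diameter 3 with valency k that is antipodal, i.e. the relation on vertices defined by 'x = y or d(x,y) = 3' is an equivalence relation, and let θ1 be the second-largest eigenvalue of its adjacency matrix. Then h_G ≤ (k − θ1)/k. -/
/-!
In an antipodal distance-regular graph of diameter 3 the closed neighbourhoods of the vertices of
one antipodal class partition the vertex set, and a neighbour of `x` meets the neighbourhood of
every other vertex of the class of `x` in exactly `c₂` vertices. Hence all classes have the same
size `r`, `a₁ = k - 1 - (r - 1) c₂`, and the union `S` of the closed neighbourhoods of `⌊r/2⌋`
vertices of one class has `|S| = ⌊r/2⌋ (k + 1)` and `E[S,Sᶜ] = ⌊r/2⌋ ⌈r/2⌉ k c₂`, so that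
`h_G ≤ ⌈r/2⌉ c₂ / (k + 1)`.

On the spectral side `A² = k I + a₁ A + c₂ (J - A - P)`, where `P` is the indicator matrix of the
antipodal relation, which is positive semidefinite. Evaluating the quadratic form at an
eigenvector orthogonal to the constants gives `θ² - (a₁ - c₂) θ ≤ k` for every eigenvalue
`θ ≠ k`, and `⌈r/2⌉ c₂ / (k + 1) ≤ (k - θ₁) / k` follows by comparing with the larger root of
`X² - (a₁ - c₂) X - k`, separately for `r` even and odd.
-/

open Finset Matrix

/-- `G` is distance-regular of diameter `D` with intersection numbers `b i`, `c i`: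
for every pair of vertices `x, y` at graph distance `i ≤ D`, the vertex `y` has exactly
`c i` neighbors at distance `i - 1` from `x` and exactly `b i` neighbors at distance
`i + 1` from `x`. -/
def IsDistRegular {V : Type} [Fintype V] (G : SimpleGraph V) (D : ℕ) (b c : ℕ → ℕ) : Prop :=
  ∀ i ≤ D, ∀ x y : V, G.dist x y = i →
    Nat.card {z : V | G.Adj y z ∧ G.dist x z = i - 1} = c i ∧
    Nat.card {z : V | G.Adj y z ∧ G.dist x z = i + 1} = b i

section LinearAlgebra

variable {V : Type*} [Fintype V]

theorem posSemidef_of_equivalence {R : Type*} [CommRing R] [PartialOrder R] [StarRing R]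
    [StarOrderedRing R] {r : V → V → Prop} [DecidableRel r] (hr : Equivalence r) :
    (Matrix.of fun x y => if r x y then (1 : R) else 0).PosSemidef := by
  classical
  let s : Setoid V := ⟨r, hr⟩
  let B : Matrix (Quotient s) V R := Matrix.of fun q y => if Quotient.mk s y = q then 1 else 0
  convert posSemidef_conjTranspose_mul_self B using 1
  ext x y
  simp only [B, s, conjTranspose_apply, of_apply, mul_apply]
  simp [Quotient.eq]
  split_ifs <;> simp

theorem sq_sub_mul_le_of_mul_self_eq [DecidableEq V] {A P : Matrix V V ℝ} {k a c μ : ℝ}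
    {f : V → ℝ} (hA : Aᵀ = A) (hrow : A *ᵥ (fun _ => 1) = fun _ => k)
    (hsq : A * A = k • 1 + a • A + c • (Matrix.of (fun _ _ => 1) - A - P))
    (hP : P.PosSemidef) (hc : 0 ≤ c) (hf : f ≠ 0) (hμ : A *ᵥ f = μ • f) (hμk : μ ≠ k) :
    μ ^ 2 - (a - c) * μ ≤ k := by
  have hsum : (fun _ => (1 : ℝ)) ⬝ᵥ f = 0 := by
    have h : μ * ((fun _ => (1 : ℝ)) ⬝ᵥ f) = k * ((fun _ => (1 : ℝ)) ⬝ᵥ f) := by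
      rw [← smul_eq_mul, ← dotProduct_smul, ← hμ, dotProduct_mulVec, ← mulVec_transpose, hA,
        hrow]
      simp [dotProduct, Finset.mul_sum]
    by_contra hs
    exact hμk (mul_right_cancel₀ hs h)
  have hJ : (Matrix.of (fun _ _ => 1) : Matrix V V ℝ) *ᵥ f = 0 := by
    ext x
    simpa [mulVec, dotProduct] using hsum
  have hff : 0 < f ⬝ᵥ f :=
    lt_of_le_of_ne (by simpa using dotProduct_star_self_nonneg f)
      (Ne.symm (dotProduct_self_eq_zero.not.mpr hf))
  have hPf : 0 ≤ f ⬝ᵥ P *ᵥ f := by simpa using hP.dotProduct_mulVec_nonneg f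
  have key : μ ^ 2 * (f ⬝ᵥ f) = (k + (a - c) * μ) * (f ⬝ᵥ f) - c * (f ⬝ᵥ P *ᵥ f) := by
    have h := congrArg (fun M => f ⬝ᵥ M *ᵥ f) hsq
    simp only [← mulVec_mulVec, hμ, mulVec_smul, add_mulVec, sub_mulVec, smul_mulVec,
      one_mulVec, hJ, dotProduct_zero, dotProduct_add, dotProduct_sub, dotProduct_smul,
      smul_eq_mul] at h
    linear_combination h
  have : (μ ^ 2 - (a - c) * μ) * (f ⬝ᵥ f) ≤ k * (f ⬝ᵥ f) := by
    nlinarith [mul_nonneg hc hPf]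
  exact le_of_mul_le_mul_right this hff

end LinearAlgebra

theorem le_of_sq_sub_mul_le {θ t β K : ℝ} (hθ : θ ^ 2 - β * θ ≤ K) (ht : K ≤ t ^ 2 - β * t)
    (hβ : β ≤ 2 * t) : θ ≤ t := by
  by_contra! h
  nlinarith [mul_pos (sub_pos.mpr h) (by linarith : 0 < θ + t - β)]

theorem div_le_of_sq_sub_mul_le {K C θ : ℝ} {r m : ℕ} (hm : 1 ≤ m)
    (hr : r = 2 * m ∨ r = 2 * m + 1) (hC : 0 ≤ C) (hK : 1 + (r - 1) * C ≤ K)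
    (hθ : θ ^ 2 - (K - 1 - r * C) * θ ≤ K) :
    (r - m) * C / (K + 1) ≤ (K - θ) / K := by
  have hCx : C ≤ m * C := le_mul_of_one_le_left hC (by exact_mod_cast hm)
  have hxK : m * C ≤ K - 1 := by rcases hr with rfl | rfl <;> push_cast at hK <;> linarith
  have hK0 : 0 < K := by linarith
  -- `θ ≤ t := K (K + 1 - (r - m) C) / (K + 1)` by `le_of_sq_sub_mul_le`, scaled by `K + 1`.
  have hv : K * (K + 1) ^ 2 ≤ (K * (K + 1 - (r - m) * C)) ^ 2
      - (K - 1 - r * C) * (K + 1) * (K * (K + 1 - (r - m) * C)) ∧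
      (K - 1 - r * C) * (K + 1) ≤ 2 * (K * (K + 1 - (r - m) * C)) := by
    have hx0 : 0 ≤ m * C := hC.trans hCx
    rcases hr with rfl | rfl <;> push_cast at hK ⊢
    · refine ⟨?_, by nlinarith⟩
      have hP : 0 ≤ K * (m * C * ((K - m * C) * (K + 2) + 1)) := by
        have : 0 ≤ K - m * C := by linarith
        positivity
      linear_combination hP
    · refine ⟨?_, by nlinarith⟩
      have hd : 0 ≤ K - 1 - 2 * (m * C) := by linarith
      have he : 0 ≤ m * C - C := by linarith
      -- with `x = m C`, `d = K - 1 - 2x`, `e = x - C` this is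
      -- `2x²d + 4x + 4xd + xd² + 2x²e + 5xe + xde + eC`
      have hP : 0 ≤ m * C * ((K - m * C) * (K + 2) + 1) - C * (K * (m * C) + 3 * (m * C) + C) := by
        linarith [mul_nonneg (mul_nonneg hx0 hx0) hd, mul_nonneg hx0 hd,
          mul_nonneg (mul_nonneg hx0 hd) hd, mul_nonneg (mul_nonneg hx0 hx0) he,
          mul_nonneg hx0 he, mul_nonneg (mul_nonneg hx0 hd) he, mul_nonneg he hC]
      linear_combination K * hP
  have key : θ * (K + 1) ≤ K * (K + 1 - (r - m) * C) :=
    le_of_sq_sub_mul_le (by linear_combination (K + 1) ^ 2 * hθ) hv.1 hv.2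
  rw [div_le_div_iff₀ (by linarith) hK0]
  linarith

namespace SimpleGraph

theorem Connected.exists_adj_dist_eq {V : Type*} {G : SimpleGraph V} (hG : G.Connected)
    {x y : V} {i : ℕ} (h : G.dist x y = i + 1) : ∃ z, G.Adj y z ∧ G.dist x z = i := by
  obtain ⟨p, hp⟩ := hG.exists_walk_length_eq_dist y x
  rw [dist_comm, h] at hp
  cases p with
  | nil => simp at hp
  | @cons _ z _ hadj q =>
    refine ⟨z, hadj, le_antisymm ?_ ?_⟩
    · have hq : q.length = i := by simpa using hp
      rw [dist_comm, ← hq]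
      exact dist_le q
    · have := hG.dist_triangle (u := x) (v := z) (w := y)
      rw [dist_comm (u := z), dist_eq_one_iff_adj.mpr hadj] at this
      omega

theorem card_interedges_biUnion {V ι : Type*} [DecidableEq V] {G : SimpleGraph V}
    [DecidableRel G.Adj] (s t : Finset ι) (f g : ι → Finset V)
    (hf : (s : Set ι).PairwiseDisjoint f) (hg : (t : Set ι).PairwiseDisjoint g) :
    #(G.interedges (s.biUnion f) (t.biUnion g)) =
      ∑ a ∈ s, ∑ b ∈ t, #(G.interedges (f a) (g b)) := by
  rw [interedges_biUnion_left,
    card_biUnion fun a ha b hb hab => G.interedges_disjoint_left (hf ha hb hab) _]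
  refine sum_congr rfl fun a _ => ?_
  rw [interedges_biUnion_right,
    card_biUnion fun b hb b' hb' hbb' => G.interedges_disjoint_right _ (hg hb hb' hbb')]

variable {V : Type*} [Fintype V] [DecidableEq V]

noncomputable def antipodalClass (G : SimpleGraph V) (x : V) : Finset V :=
  {y | x = y ∨ G.dist x y = 3}

theorem self_mem_antipodalClass (G : SimpleGraph V) (x : V) : x ∈ G.antipodalClass x :=
  mem_filter.mpr ⟨mem_univ x, Or.inl rfl⟩

theorem one_lt_card_antipodalClass {G : SimpleGraph V} {x y : V} (h : G.dist x y = 3) :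
    1 < #(G.antipodalClass x) :=
  one_lt_card.mpr ⟨x, G.self_mem_antipodalClass x, y, mem_filter.mpr ⟨mem_univ y, Or.inr h⟩,
    fun hxy => by simp [hxy] at h⟩

variable (G : SimpleGraph V) [DecidableRel G.Adj]

def closedNeighborFinset (x : V) : Finset V := insert x (G.neighborFinset x)

variable {G}

theorem Connected.mem_closedNeighborFinset_iff (hG : G.Connected) {x y : V} :
    y ∈ G.closedNeighborFinset x ↔ G.dist x y ≤ 1 := by
  rw [closedNeighborFinset, mem_insert, eq_comm, mem_neighborFinset, ← dist_eq_one_iff_adj,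
    ← hG.dist_eq_zero_iff]
  omega

theorem IsRegularOfDegree.card_closedNeighborFinset {k : ℕ} (hG : G.IsRegularOfDegree k)
    (x : V) : #(G.closedNeighborFinset x) = k + 1 := by
  rw [closedNeighborFinset, card_insert_of_notMem (notMem_neighborFinset_self G x),
    card_neighborFinset_eq_degree, hG x]

theorem adjMatrix_mul_self_apply {R : Type*} [NonAssocSemiring R] (x z : V) :
    (G.adjMatrix R * G.adjMatrix R) x z = #(G.neighborFinset x ∩ G.neighborFinset z) := by
  rw [mul_adjMatrix_apply]
  simp only [adjMatrix_apply, sum_boole]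
  congr 2
  ext u
  simp [and_comm]

theorem card_interedges_eq_sum (s t : Finset V) :
    #(G.interedges s t) = ∑ v ∈ s, #(G.neighborFinset v ∩ t) := by
  rw [interedges, Rel.interedges_eq_biUnion, card_biUnion]
  · refine sum_congr rfl fun v _ => ?_
    rw [card_map]
    congr 1
    ext w
    simp [and_comm]
  · intro v _ w _ hvw
    simp only [Function.onFun, Finset.disjoint_left, mem_map]
    rintro _ ⟨_, _, rfl⟩ ⟨_, _, h⟩
    exact hvw (congrArg Prod.fst h).symm

/-- The consequences of being antipodal distance-regular of diameter three, with valency `k`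
and intersection number `c₂`, that the argument uses. -/
structure IsAntipodalDiamThree (G : SimpleGraph V) [DecidableRel G.Adj] (k c₂ : ℕ) : Prop where
  connected : G.Connected
  regular : G.IsRegularOfDegree k
  dist_le_three : ∀ x y, G.dist x y ≤ 3
  card_common_of_dist_eq_two :
    ∀ x y, G.dist x y = 2 → #(G.neighborFinset x ∩ G.neighborFinset y) = c₂
  exists_adj_dist_eq_three_of_dist_eq_two :
    ∀ x y, G.dist x y = 2 → ∃ z, G.Adj y z ∧ G.dist x z = 3
  antipodal : Equivalence fun x y => x = y ∨ G.dist x y = 3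

namespace IsAntipodalDiamThree

variable {k c₂ : ℕ} (H : G.IsAntipodalDiamThree k c₂)
include H

theorem dist_eq_three_of_mem_antipodalClass {x y z : V} (hy : y ∈ G.antipodalClass x)
    (hz : z ∈ G.antipodalClass x) (hyz : y ≠ z) : G.dist y z = 3 := by
  simp only [antipodalClass, mem_filter, mem_univ, true_and] at hy hz
  exact (H.antipodal.trans (H.antipodal.symm hy) hz).resolve_left hyz

theorem dist_eq_two_of_adj {x y z : V} (hxy : G.dist x y = 3) (hxz : G.Adj x z) :
    G.dist y z = 2 := by
  have hxz1 := dist_eq_one_iff_adj.mpr hxz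
  have htri := H.connected.dist_triangle (u := x) (v := z) (w := y)
  have hyz3 : G.dist y z ≠ 3 := fun hyz =>
    (H.antipodal.trans (Or.inr hxy) (Or.inr hyz)).elim (fun h => G.irrefl (h ▸ hxz))
      (by omega)
  have := H.dist_le_three y z
  rw [dist_comm (u := z)] at htri
  omega

theorem exists_mem_antipodalClass (x w : V) :
    ∃ y ∈ G.antipodalClass x, w ∈ G.closedNeighborFinset y := by
  simp only [antipodalClass, mem_filter, mem_univ, true_and,
    H.connected.mem_closedNeighborFinset_iff]
  have := H.dist_le_three x w
  interval_cases hxw : G.dist x w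
  · exact ⟨w, Or.inl (H.connected.dist_eq_zero_iff.mp hxw), by simp⟩
  · exact ⟨x, Or.inl rfl, hxw.le⟩
  · obtain ⟨y, hwy, hxy⟩ := H.exists_adj_dist_eq_three_of_dist_eq_two x w hxw
    exact ⟨y, Or.inr hxy, by rw [dist_comm, dist_eq_one_iff_adj.mpr hwy]⟩
  · exact ⟨w, Or.inr hxw, by simp⟩

theorem pairwiseDisjoint_closedNeighborFinset (x : V) :
    (G.antipodalClass x : Set V).PairwiseDisjoint G.closedNeighborFinset := by
  intro y hy z hz hyz
  rw [Function.onFun, Finset.disjoint_left]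
  intro w hwy hwz
  rw [H.connected.mem_closedNeighborFinset_iff] at hwy hwz
  have := H.dist_eq_three_of_mem_antipodalClass hy hz hyz
  have := H.connected.dist_triangle (u := y) (v := w) (w := z)
  rw [dist_comm (u := w)] at this
  omega

theorem biUnion_closedNeighborFinset (x : V) :
    (G.antipodalClass x).biUnion G.closedNeighborFinset = univ :=
  eq_univ_of_forall fun w => mem_biUnion.mpr (H.exists_mem_antipodalClass x w)

theorem card_antipodalClass_mul (x : V) :
    #(G.antipodalClass x) * (k + 1) = Fintype.card V := by
  rw [← card_univ, ← H.biUnion_closedNeighborFinset x,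
    card_biUnion (H.pairwiseDisjoint_closedNeighborFinset x),
    sum_const_nat fun y _ => H.regular.card_closedNeighborFinset y]

theorem card_antipodalClass_eq (x y : V) : #(G.antipodalClass x) = #(G.antipodalClass y) :=
  Nat.eq_of_mul_eq_mul_right k.succ_pos
    ((H.card_antipodalClass_mul x).trans (H.card_antipodalClass_mul y).symm)

theorem card_neighborFinset_inter_closedNeighborFinset {x y z : V} (hxz : G.Adj x z)
    (hxy : G.dist x y = 3) : #(G.neighborFinset z ∩ G.closedNeighborFinset y) = c₂ := by
  have hyz := H.dist_eq_two_of_adj hxy hxz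
  have hzy : ¬ G.Adj z y := fun h => by
    rw [dist_comm, dist_eq_one_iff_adj.mpr h] at hyz; omega
  rw [closedNeighborFinset, inter_insert_of_notMem (by simpa using hzy), inter_comm,
    H.card_common_of_dist_eq_two y z hyz]

theorem card_common_add_of_adj {x z : V} (hxz : G.Adj x z) :
    #(G.neighborFinset x ∩ G.neighborFinset z) + 1 + (#(G.antipodalClass x) - 1) * c₂ = k := by
  have hx := G.self_mem_antipodalClass x
  have hsplit : G.neighborFinset z =
      (G.antipodalClass x).biUnion fun y => G.neighborFinset z ∩ G.closedNeighborFinset y := by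
    rw [← inter_biUnion, H.biUnion_closedNeighborFinset, inter_univ]
  have hown : #(G.neighborFinset z ∩ G.closedNeighborFinset x) =
      #(G.neighborFinset x ∩ G.neighborFinset z) + 1 := by
    rw [closedNeighborFinset, inter_insert_of_mem (by simpa using hxz.symm),
      card_insert_of_notMem (by simp), inter_comm]
  have hdisj : (G.antipodalClass x : Set V).PairwiseDisjoint
      fun y => G.neighborFinset z ∩ G.closedNeighborFinset y :=
    (H.pairwiseDisjoint_closedNeighborFinset x).mono fun _ => inter_subset_right
  rw [← H.regular z, ← card_neighborFinset_eq_degree]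
  conv_rhs => rw [hsplit, card_biUnion hdisj, ← add_sum_erase _ _ hx, hown]
  rw [sum_congr rfl fun y hy => H.card_neighborFinset_inter_closedNeighborFinset hxz
    (H.dist_eq_three_of_mem_antipodalClass hx (mem_of_mem_erase hy) (ne_of_mem_erase hy).symm),
    sum_const, card_erase_of_mem hx, smul_eq_mul]

theorem one_add_mul_le_of_adj {x z : V} (hxz : G.Adj x z) (x₀ : V) :
    1 + (#(G.antipodalClass x₀) - 1) * c₂ ≤ k := by
  have h := H.card_common_add_of_adj hxz
  rw [H.card_antipodalClass_eq x x₀] at h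
  omega

theorem adjMatrix_mul_self (x₀ : V) :
    G.adjMatrix ℝ * G.adjMatrix ℝ = (k : ℝ) • 1
      + ((k : ℝ) - 1 - (#(G.antipodalClass x₀) - 1) * c₂) • G.adjMatrix ℝ
      + (c₂ : ℝ) • (Matrix.of (fun _ _ => 1) - G.adjMatrix ℝ
        - Matrix.of fun x y => if x = y ∨ G.dist x y = 3 then 1 else 0) := by
  ext x z
  rw [adjMatrix_mul_self_apply]
  simp only [Matrix.add_apply, Matrix.smul_apply, Matrix.sub_apply, Matrix.one_apply,
    Matrix.of_apply, adjMatrix_apply, smul_eq_mul]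
  have := H.dist_le_three x z
  interval_cases hxz : G.dist x z
  · obtain rfl := H.connected.dist_eq_zero_iff.mp hxz
    simp [card_neighborFinset_eq_degree, H.regular x]
  · have hadj := dist_eq_one_iff_adj.mp hxz
    have hr : 1 ≤ #(G.antipodalClass x₀) := card_pos.mpr ⟨x₀, G.self_mem_antipodalClass x₀⟩
    have h := H.card_common_add_of_adj hadj
    rw [H.card_antipodalClass_eq x x₀] at h
    rw [← h]
    simp [hadj, G.ne_of_adj hadj, Nat.cast_sub hr]
    ring
  · have hnadj : ¬ G.Adj x z := fun h => by rw [dist_eq_one_iff_adj.mpr h] at hxz; omega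
    have hne : x ≠ z := fun h => by rw [h, dist_self] at hxz; omega
    simp [hnadj, hne, H.card_common_of_dist_eq_two x z hxz]
  · have hnadj : ¬ G.Adj x z := fun h => by rw [dist_eq_one_iff_adj.mpr h] at hxz; omega
    have hempty : G.neighborFinset x ∩ G.neighborFinset z = ∅ := by
      refine eq_empty_of_forall_notMem fun w hw => ?_
      simp only [mem_inter, mem_neighborFinset] at hw
      have := H.connected.dist_triangle (u := x) (v := w) (w := z)
      rw [dist_eq_one_iff_adj.mpr hw.1, dist_comm (u := w), dist_eq_one_iff_adj.mpr hw.2] at this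
      omega
    have hne : x ≠ z := fun h => by rw [h, dist_self] at hxz; omega
    simp [hnadj, hne, hempty]

theorem sq_sub_mul_le_of_mulVec_eq (x₀ : V) {μ : ℝ} {f : V → ℝ} (hf : f ≠ 0)
    (hAf : G.adjMatrix ℝ *ᵥ f = μ • f) (hμk : μ ≠ k) :
    μ ^ 2 - ((k : ℝ) - 1 - #(G.antipodalClass x₀) * c₂) * μ ≤ k := by
  have h := sq_sub_mul_le_of_mul_self_eq (transpose_adjMatrix G) ?_ (H.adjMatrix_mul_self x₀)
    (posSemidef_of_equivalence H.antipodal) (Nat.cast_nonneg c₂) hf hAf hμk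
  · linear_combination h
  · ext x
    simpa using adjMatrix_mulVec_const_apply_of_regular (a := (1 : ℝ)) H.regular (v := x)

theorem card_interedges_closedNeighborFinset {x y : V} (hxy : G.dist x y = 3) :
    #(G.interedges (G.closedNeighborFinset x) (G.closedNeighborFinset y)) = k * c₂ := by
  have hfar : G.neighborFinset x ∩ G.closedNeighborFinset y = ∅ := by
    refine eq_empty_of_forall_notMem fun w hw => ?_
    rw [mem_inter, mem_neighborFinset, H.connected.mem_closedNeighborFinset_iff] at hw
    have := H.connected.dist_triangle (u := x) (v := w) (w := y)
    rw [dist_eq_one_iff_adj.mpr hw.1, dist_comm (u := w)] at this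
    omega
  rw [card_interedges_eq_sum, closedNeighborFinset, sum_insert (by simp), hfar, card_empty,
    zero_add, sum_congr rfl fun z hz =>
      H.card_neighborFinset_inter_closedNeighborFinset ((mem_neighborFinset _ _ _).mp hz) hxy,
    sum_const, card_neighborFinset_eq_degree, H.regular x, smul_eq_mul]

theorem compl_biUnion_closedNeighborFinset {x₀ : V} {T : Finset V}
    (hT : T ⊆ G.antipodalClass x₀) :
    (T.biUnion G.closedNeighborFinset)ᶜ =
      (G.antipodalClass x₀ \ T).biUnion G.closedNeighborFinset := by
  refine IsCompl.compl_eq (IsCompl.of_eq ?_ ?_)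
  · rw [← disjoint_iff, disjoint_biUnion_left]
    intro x hx
    rw [disjoint_biUnion_right]
    intro y hy
    exact H.pairwiseDisjoint_closedNeighborFinset x₀ (hT hx) (mem_sdiff.mp hy).1
      fun h => (mem_sdiff.mp hy).2 (h ▸ hx)
  · rw [sup_eq_union, ← union_biUnion, union_sdiff_of_subset hT,
      H.biUnion_closedNeighborFinset, top_eq_univ]

theorem card_biUnion_closedNeighborFinset {x₀ : V} {T : Finset V}
    (hT : T ⊆ G.antipodalClass x₀) : #(T.biUnion G.closedNeighborFinset) = #T * (k + 1) := by
  rw [card_biUnion ((H.pairwiseDisjoint_closedNeighborFinset x₀).subset hT),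
    sum_const_nat fun y _ => H.regular.card_closedNeighborFinset y]

theorem card_interedges_biUnion_closedNeighborFinset {x₀ : V} {T : Finset V}
    (hT : T ⊆ G.antipodalClass x₀) :
    #(G.interedges (T.biUnion G.closedNeighborFinset) (T.biUnion G.closedNeighborFinset)ᶜ) =
      #T * (#(G.antipodalClass x₀) - #T) * (k * c₂) := by
  rw [H.compl_biUnion_closedNeighborFinset hT, card_interedges_biUnion _ _ _ _
    ((H.pairwiseDisjoint_closedNeighborFinset x₀).subset hT)
    ((H.pairwiseDisjoint_closedNeighborFinset x₀).subset sdiff_subset),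
    sum_congr rfl fun x hx => sum_congr rfl fun y hy => H.card_interedges_closedNeighborFinset
      (H.dist_eq_three_of_mem_antipodalClass (hT hx) (mem_sdiff.mp hy).1
        fun h => (mem_sdiff.mp hy).2 (h ▸ hx)),
    sum_const, sum_const, card_sdiff_of_subset hT, smul_eq_mul, smul_eq_mul, mul_assoc]

end IsAntipodalDiamThree

end SimpleGraph

open SimpleGraph in
theorem IsDistRegular.isAntipodalDiamThree {V : Type} [Fintype V] [DecidableEq V]
    {G : SimpleGraph V} [DecidableRel G.Adj] {b c : ℕ → ℕ} {k : ℕ} (hconn : G.Connected)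
    (hdrg : IsDistRegular G 3 b c) (hk : b 0 = k)
    (hdiam : (∀ x y : V, G.dist x y ≤ 3) ∧ ∃ x y : V, G.dist x y = 3)
    (hant : Equivalence (fun x y : V => x = y ∨ G.dist x y = 3)) :
    G.IsAntipodalDiamThree k (c 2) := by
  have hcard : ∀ i ≤ 3, ∀ x y, G.dist x y = i →
      #{z | G.Adj y z ∧ G.dist x z = i - 1} = c i ∧
        #{z | G.Adj y z ∧ G.dist x z = i + 1} = b i := by
    intro i hi x y h
    simpa [Nat.card_eq_fintype_card, Fintype.card_subtype] using hdrg i hi x y h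
  obtain ⟨x₀, y₀, h₀⟩ := hdiam.2
  obtain ⟨z₀, hz₀, hxz₀⟩ := hconn.exists_adj_dist_eq (i := 2) h₀
  have hb : 0 < b 2 := (hcard 2 (by norm_num) x₀ z₀ hxz₀).2 ▸
    card_pos.mpr ⟨y₀, by simp [hz₀.symm, h₀]⟩
  refine ⟨hconn, fun v => ?_, hdiam.1, fun x y h => ?_, fun x y h => ?_, hant⟩
  · rw [← card_neighborFinset_eq_degree, ← hk, ← (hcard 0 (by norm_num) v v dist_self).2]
    congr 1
    ext
    simp
  · rw [← (hcard 2 (by norm_num) x y h).1]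
    congr 1
    ext
    simp [and_comm]
  · obtain ⟨z, hz⟩ := card_pos.mp ((hcard 2 (by norm_num) x y h).2 ▸ hb)
    exact ⟨z, by simpa using hz⟩

theorem cheeger_le_eB_div {V : Type} [Fintype V] [DecidableEq V] (G : SimpleGraph V)
    [DecidableRel G.Adj] (k : ℕ) {S : Finset V} (hS : S.Nonempty)
    (h2S : 2 * #S ≤ Fintype.card V) : cheeger G k ≤ eB G S Sᶜ / (k * #S) :=
  csInf_le ⟨0, by rintro _ ⟨T, -, -, rfl⟩; positivity⟩ ⟨S, hS, h2S, rfl⟩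

theorem SimpleGraph.IsAntipodalDiamThree.cheeger_le {V : Type} [Fintype V] [DecidableEq V]
    {G : SimpleGraph V} [DecidableRel G.Adj] {k c₂ : ℕ} (H : G.IsAntipodalDiamThree k c₂)
    {x₀ : V} (hr : 1 < #(G.antipodalClass x₀)) :
    cheeger G k ≤ (#(G.antipodalClass x₀) - #(G.antipodalClass x₀) / 2 : ℕ) * c₂ / (k + 1) := by
  obtain ⟨T, hT, hTcard⟩ := exists_subset_card_eq (Nat.div_le_self #(G.antipodalClass x₀) 2)
  have hS := H.card_biUnion_closedNeighborFinset hT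
  have hE := H.card_interedges_biUnion_closedNeighborFinset hT
  have hV := H.card_antipodalClass_mul x₀
  generalize #(G.antipodalClass x₀) = r at *
  calc cheeger G k ≤ eB G (T.biUnion G.closedNeighborFinset) (T.biUnion G.closedNeighborFinset)ᶜ
        / (k * #(T.biUnion G.closedNeighborFinset)) :=
      cheeger_le_eB_div G k
        (card_pos.mp (by rw [hS, hTcard]; exact Nat.mul_pos (by omega) k.succ_pos))
        (by rw [hS, hTcard, ← hV, ← mul_assoc]; exact Nat.mul_le_mul_right _ (by omega))
    _ ≤ (r - r / 2 : ℕ) * c₂ / (k + 1) := by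
      rw [show eB G _ _ = #(G.interedges _ _) from rfl, hE, hS, hTcard]
      rcases eq_or_ne (k : ℝ) 0 with hk | hk
      · rw [hk, zero_mul, div_zero]
        positivity
      have : ((r / 2 : ℕ) : ℝ) ≠ 0 := Nat.cast_ne_zero.mpr (by omega)
      refine le_of_eq ?_
      push_cast
      field_simp

/-- A finite antipodal distance-regular graph of diameter 3 with valency `k` (i.e. the
relation "`x = y` or `d(x,y) = 3`" is an equivalence relation) with second-largest
adjacency eigenvalue `θ1` satisfies `h_G ≤ (k - θ1)/k`. -/
theorem stmt_13 {V : Type} [Fintype V] [DecidableEq V] (G : SimpleGraph V) [DecidableRel G.Adj]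
    (b c : ℕ → ℕ) (k : ℕ) (hconn : G.Connected)
    (hdrg : IsDistRegular G 3 b c) (hk : b 0 = k)
    (hdiam : (∀ x y : V, G.dist x y ≤ 3) ∧ ∃ x y : V, G.dist x y = 3)
    (hant : Equivalence (fun x y : V => x = y ∨ G.dist x y = 3))
    (θ1 : ℝ) (hθ1 : IsSecondLargestAdjEigenvalue G k θ1) :
    cheeger G k ≤ ((k : ℝ) - θ1) / (k : ℝ) := by
  have H := IsDistRegular.isAntipodalDiamThree hconn hdrg hk hdiam hant
  obtain ⟨x₀, y₀, h₀⟩ := hdiam.2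
  obtain ⟨z₀, hz₀, -⟩ := hconn.exists_adj_dist_eq (i := 2) h₀
  obtain ⟨f, hf, hAf⟩ := hθ1.1
  have hr := SimpleGraph.one_lt_card_antipodalClass h₀
  have hcut := H.cheeger_le hr
  have ha₁ := H.one_add_mul_le_of_adj hz₀ x₀
  have hθ := H.sq_sub_mul_le_of_mulVec_eq x₀ hf hAf hθ1.2.1
  generalize #(G.antipodalClass x₀) = r at *
  refine hcut.trans ?_
  push_cast [Nat.div_le_self r 2]
  exact div_le_of_sq_sub_mul_le (by omega) (by omega) (Nat.cast_nonneg _)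
    (by simpa [Nat.cast_sub hr.le] using (Nat.cast_le (α := ℝ)).mpr ha₁)
    (by linear_combination hθ)
end

section
/- Let G be a finite distance-regular graph of diameter 3 with valency k and intersection numbers b_i, c_i, set a_3 = k − c_3, and let θ1 be the second-largest eigenvalue of its adjacency matrix. Suppose G is Shilla, i.e. θ1 = a_3, and suppose that for every vertex x the set Γ3(x) of vertices at distance 3 from x satisfies 2·|Γ3(x)| ≤ |V(G)|. Then h_G ≤ c_3/k = (k − θ1)/k. -/
/-!
Take `S = Γ₃(x)` for a vertex `x` at distance 3 from some vertex. As the diameter is 3, a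
neighbour of `y ∈ S` outside `S` lies in `Γ₂(x)`, so every vertex of `S` has exactly `c₃`
neighbours outside `S`. Hence `E[S,Sᶜ] = c₃·|S|`, and `S` witnesses `h_G ≤ c₃/k`.
-/

open Finset Matrix

/-- `Γ_i(x)`. -/
noncomputable def distSphere {V : Type} [Fintype V] (G : SimpleGraph V) (x : V) (i : ℕ) :
    Finset V :=
  univ.filter fun y => G.dist x y = i

theorem mem_distSphere {V : Type} [Fintype V] {G : SimpleGraph V} {x y : V} {i : ℕ} :
    y ∈ distSphere G x i ↔ G.dist x y = i := by
  simp [distSphere]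

theorem card_distSphere {V : Type} [Fintype V] (G : SimpleGraph V) (x : V) (i : ℕ) :
    (distSphere G x i).card = Nat.card {y : V | G.dist x y = i} := by
  rw [Nat.card_eq_fintype_card, Fintype.card_subtype]
  rfl

theorem cheeger_le {V : Type} [Fintype V] [DecidableEq V] (G : SimpleGraph V)
    [DecidableRel G.Adj] (k : ℕ) {S : Finset V} (hS : S.Nonempty)
    (hcard : 2 * S.card ≤ Fintype.card V) :
    cheeger G k ≤ (eB G S Sᶜ : ℝ) / (k * S.card) := by
  refine csInf_le ⟨0, ?_⟩ ⟨S, hS, hcard, rfl⟩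
  rintro _ ⟨T, -, -, rfl⟩
  positivity

theorem eB_eq_sum_card_filter_adj {V : Type} [Fintype V] [DecidableEq V] (G : SimpleGraph V)
    [DecidableRel G.Adj] (S T : Finset V) :
    eB G S T = ∑ y ∈ S, (T.filter (G.Adj y)).card := by
  simp only [eB, card_filter, sum_product]

theorem eB_eq_mul_card {V : Type} [Fintype V] [DecidableEq V] (G : SimpleGraph V)
    [DecidableRel G.Adj] {S T : Finset V} {d : ℕ}
    (hd : ∀ y ∈ S, (T.filter (G.Adj y)).card = d) :
    eB G S T = d * S.card := by
  rw [eB_eq_sum_card_filter_adj, sum_congr rfl hd, sum_const, smul_eq_mul, mul_comm]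

/-- In a distance-regular graph whose distances from `x` are at most `D`, the neighbours of
`y ∈ Γ_D(x)` outside `Γ_D(x)` are exactly those at distance `D - 1` from `x`. -/
theorem card_adj_compl_distSphere {V : Type} [Fintype V] [DecidableEq V] {G : SimpleGraph V}
    [DecidableRel G.Adj] {D : ℕ} {b c : ℕ → ℕ} (hconn : G.Connected)
    (hdrg : IsDistRegular G D b c) {x y : V} (hmax : ∀ z, G.dist x z ≤ D)
    (hy : y ∈ distSphere G x D) :
    ((distSphere G x D)ᶜ.filter (G.Adj y)).card = c D := by
  rw [mem_distSphere] at hy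
  have hc := (hdrg D le_rfl x y hy).1
  rw [Nat.card_eq_fintype_card, Fintype.card_subtype] at hc
  rw [← hc]
  congr 1
  ext z
  simp only [mem_filter, mem_compl, mem_univ, true_and, mem_distSphere]
  constructor
  · rintro ⟨hzD, hadj⟩
    have hyz : G.dist x y ≤ G.dist x z + G.dist z y := hconn.dist_triangle
    rw [SimpleGraph.dist_eq_one_iff_adj.mpr hadj.symm] at hyz
    exact ⟨hadj, by have := hmax z; omega⟩
  · rintro ⟨hadj, hz⟩
    refine ⟨fun hzD => ?_, hadj⟩
    obtain rfl : D = 0 := by omega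
    rw [hconn.dist_eq_zero_iff] at hy hzD
    subst hy hzD
    exact hadj.ne rfl

theorem eB_distSphere_compl {V : Type} [Fintype V] [DecidableEq V] {G : SimpleGraph V}
    [DecidableRel G.Adj] {D : ℕ} {b c : ℕ → ℕ} (hconn : G.Connected)
    (hdrg : IsDistRegular G D b c) {x : V} (hmax : ∀ z, G.dist x z ≤ D) :
    eB G (distSphere G x D) (distSphere G x D)ᶜ = c D * (distSphere G x D).card :=
  eB_eq_mul_card G fun _ hy => card_adj_compl_distSphere hconn hdrg hmax hy

theorem stmt_14_general {V : Type} [Fintype V] [DecidableEq V] (G : SimpleGraph V) [DecidableRel G.Adj]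
    (b c : ℕ → ℕ) (k : ℕ) (hconn : G.Connected)
    (hdrg : IsDistRegular G 3 b c)
    (hdiam : (∀ x y : V, G.dist x y ≤ 3) ∧ ∃ x y : V, G.dist x y = 3)
    (hhalf : ∀ x : V, 2 * Nat.card {y : V | G.dist x y = 3} ≤ Fintype.card V) :
    cheeger G k ≤ (c 3 : ℝ) / (k : ℝ) := by
  obtain ⟨hmax, x, y, hxy⟩ := hdiam
  set S := distSphere G x 3
  have hS : S.Nonempty := ⟨y, mem_distSphere.mpr hxy⟩
  have hS0 : (S.card : ℝ) ≠ 0 := Nat.cast_ne_zero.mpr hS.card_pos.ne'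
  calc cheeger G k ≤ (eB G S Sᶜ : ℝ) / (k * S.card) :=
        cheeger_le G k hS (card_distSphere G x 3 ▸ hhalf x)
    _ = (c 3 * S.card : ℝ) / (k * S.card) := by
        rw [eB_distSphere_compl hconn hdrg (hmax x)]; push_cast; rfl
    _ = c 3 / k := mul_div_mul_right _ _ hS0

/-- A Shilla distance-regular graph of diameter 3 (one whose second-largest adjacency
eigenvalue `θ1` equals `a_3 = k - c_3`) in which `2·|Γ₃(x)| ≤ |V|` for every vertex `x`
satisfies `h_G ≤ c_3/k = (k - θ1)/k`. -/
theorem stmt_14 {V : Type} [Fintype V] [DecidableEq V] (G : SimpleGraph V) [DecidableRel G.Adj]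
    (b c : ℕ → ℕ) (k : ℕ) (hconn : G.Connected)
    (hdrg : IsDistRegular G 3 b c) (hk : b 0 = k)
    (hdiam : (∀ x y : V, G.dist x y ≤ 3) ∧ ∃ x y : V, G.dist x y = 3)
    (θ1 : ℝ) (hθ1 : IsSecondLargestAdjEigenvalue G k θ1)
    (hshilla : θ1 = (k : ℝ) - (c 3 : ℝ))
    (hhalf : ∀ x : V, 2 * Nat.card {y : V | G.dist x y = 3} ≤ Fintype.card V) :
    cheeger G k ≤ (c 3 : ℝ) / (k : ℝ) :=
  stmt_14_general G b c k hconn hdrg hdiam hhalf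
end
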